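/- arXiv:2412.04334 — 2 statements merged into one kernel-verified Lean document; each statement's English description precedes it below -/
import Mathlib

section
/- Let 0 < μ ≤ 1, ζ > 0, ϑ ≥ μζ, 0 < θ ≤ 1, λ > 0 and t > 0. Then for every real s, the generating function of the fractional counting process probabilities satisfies ∑_{n=0}^∞ s^n P(n,t) = Γ(ϑ) · E_{μ,ϑ}^{ζ}(λ t^θ (s − 1)), where the underlying double series converges absolutely. In particular, taking s = 1, ∑_{n=0}^∞ P(n,t) = 1. -/
/-!
Put `x = λ t^θ` and `c m = (ζ)_m / (m! Γ(μ m + ϑ))`. Since `(ζ)_n (ζ + n)_k = (ζ)_(n+k)`, the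
`(n, k)` term of the double series is `Γ(ϑ) c (n + k) (n+k choose n) (x s)^n (-x)^k`, so summing
along the antidiagonals `n + k = m` with the binomial theorem gives `Γ(ϑ) ∑ c m (x (s - 1))^m`.
The rearrangement is legitimate because the same computation with absolute values produces the
Mittag-Leffler series at `|x| (|s| + 1)`, which converges by the ratio test: consecutive
coefficients have ratio about `Γ(μ m + ϑ) / Γ(μ m + ϑ + μ) → 0`. At `s = 1` only the term
`c 0 = 1 / Γ(ϑ)` survives.
-/

open Real

/-- Rising factorial (Pochhammer symbol) `(ζ)_n = Γ(ζ+n)/Γ(ζ)`. -/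
noncomputable def risingFactorial (ζ : ℝ) (n : ℕ) : ℝ :=
  Real.Gamma (ζ + n) / Real.Gamma ζ

/-- Three-parameter (Prabhakar) Mittag-Leffler function. -/
noncomputable def mittagLeffler (μ ϑ ζ z : ℝ) : ℝ :=
  ∑' m : ℕ, risingFactorial ζ m * z ^ m / (m.factorial * Real.Gamma (μ * m + ϑ))

/-- Probability function of the fractional counting process:
`P(n,t) = (ζ)_n Γ(ϑ) (λ t^θ)^n / n! ∑_k (ζ+n)_k (−λ t^θ)^k / (k! Γ(μ(n+k)+ϑ))`. -/
noncomputable def fcpP (μ ϑ ζ θ lam : ℝ) (n : ℕ) (t : ℝ) : ℝ :=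
  risingFactorial ζ n * Real.Gamma ϑ * (lam * t ^ θ) ^ n / n.factorial *
    ∑' k : ℕ, risingFactorial (ζ + n) k * (-(lam * t ^ θ)) ^ k /
      (k.factorial * Real.Gamma (μ * (n + k : ℕ) + ϑ))

open Filter Topology Finset

lemma risingFactorial_zero {ζ : ℝ} (hζ : 0 < ζ) : risingFactorial ζ 0 = 1 := by
  simp [risingFactorial, (Real.Gamma_pos_of_pos hζ).ne']

lemma risingFactorial_succ {ζ : ℝ} (hζ : 0 < ζ) (n : ℕ) :
    risingFactorial ζ (n + 1) = (ζ + n) * risingFactorial ζ n := by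
  rw [risingFactorial, risingFactorial, Nat.cast_succ, ← add_assoc,
    Real.Gamma_add_one (by positivity), mul_div_assoc]

lemma risingFactorial_mul_risingFactorial_add {ζ : ℝ} (hζ : 0 < ζ) (n k : ℕ) :
    risingFactorial ζ n * risingFactorial (ζ + n) k = risingFactorial ζ (n + k) := by
  have hn : Real.Gamma (ζ + n) ≠ 0 := (Real.Gamma_pos_of_pos (by positivity)).ne'
  rw [risingFactorial, risingFactorial, risingFactorial, Nat.cast_add, ← add_assoc]
  field_simp

lemma mul_Gamma_le_rpow_mul_Gamma_add {μ x : ℝ} (hμ : 0 < μ) (hμ1 : μ ≤ 1) (hx : 0 < x) :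
    x * Real.Gamma x ≤ (x + μ) ^ (1 - μ) * Real.Gamma (x + μ) := by
  rcases hμ1.eq_or_lt with rfl | hμ1
  · simp [Real.Gamma_add_one hx.ne']
  have hxμ : 0 < x + μ := by positivity
  -- log-convexity of Γ at `x + 1 = μ (x + μ) + (1 - μ) (x + μ + 1)`
  have hconv := Real.Gamma_mul_add_mul_le_rpow_Gamma_mul_rpow_Gamma hxμ
    (by positivity : 0 < x + μ + 1) hμ (sub_pos.2 hμ1) (add_sub_cancel μ 1)
  rwa [show μ * (x + μ) + (1 - μ) * (x + μ + 1) = x + 1 by ring, Real.Gamma_add_one hx.ne',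
    Real.Gamma_add_one hxμ.ne', Real.mul_rpow hxμ.le (Real.Gamma_pos_of_pos hxμ).le,
    mul_left_comm, ← Real.rpow_add (Real.Gamma_pos_of_pos hxμ), add_sub_cancel,
    Real.rpow_one] at hconv

lemma tendsto_Gamma_div_Gamma_add_atTop {μ : ℝ} (hμ : 0 < μ) :
    Tendsto (fun x => Real.Gamma x / Real.Gamma (x + μ)) atTop (𝓝 0) := by
  have hnonneg : ∀ᶠ x in atTop, 0 ≤ Real.Gamma x / Real.Gamma (x + μ) := by
    filter_upwards [eventually_gt_atTop 0] with x hx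
    exact div_nonneg (Real.Gamma_pos_of_pos hx).le (Real.Gamma_pos_of_pos (by positivity)).le
  rcases le_or_gt μ 1 with hμ1 | hμ1
  · have hlim : Tendsto (fun x => 2 * (x + μ) ^ (-μ)) atTop (𝓝 0) := by
      simpa using ((tendsto_rpow_neg_atTop hμ).comp (tendsto_atTop_add_const_right _ μ
        tendsto_id)).const_mul 2
    refine tendsto_of_tendsto_of_tendsto_of_le_of_le' tendsto_const_nhds hlim hnonneg ?_
    filter_upwards [eventually_ge_atTop μ] with x hx
    have hx0 : 0 < x := hμ.trans_le hx
    have hxμ : 0 < x + μ := by positivity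
    rw [div_le_iff₀ (Real.Gamma_pos_of_pos hxμ)]
    calc Real.Gamma x = x * Real.Gamma x / x := by field_simp
      _ ≤ (x + μ) ^ (1 - μ) * Real.Gamma (x + μ) / x := by
        gcongr ?_ / _; exact mul_Gamma_le_rpow_mul_Gamma_add hμ hμ1 hx0
      _ = (x + μ) ^ (-μ) * ((x + μ) / x) * Real.Gamma (x + μ) := by
        rw [sub_eq_neg_add, Real.rpow_add_one hxμ.ne']; ring
      _ ≤ (x + μ) ^ (-μ) * 2 * Real.Gamma (x + μ) := by
        gcongr; rw [div_le_iff₀ hx0]; linarith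
      _ = 2 * (x + μ) ^ (-μ) * Real.Gamma (x + μ) := by ring
  · refine tendsto_of_tendsto_of_tendsto_of_le_of_le' tendsto_const_nhds tendsto_inv_atTop_zero
      hnonneg ?_
    filter_upwards [eventually_ge_atTop 1] with x hx
    have hx0 : 0 < x := by linarith
    -- Γ is increasing on `[2, ∞)`, so `Γ (x + μ) ≥ Γ (x + 1) = x Γ x`
    have hmono : x * Real.Gamma x ≤ Real.Gamma (x + μ) := by
      rw [← Real.Gamma_add_one hx0.ne']
      exact Real.Gamma_strictMonoOn_Ici.monotoneOn (by simp; linarith) (by simp; linarith)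
        (by linarith)
    rw [div_le_iff₀ (Real.Gamma_pos_of_pos (by positivity)), inv_mul_eq_div, le_div_iff₀ hx0]
    linarith

noncomputable def mittagLefflerCoeff (μ ϑ ζ : ℝ) (m : ℕ) : ℝ :=
  risingFactorial ζ m / (m.factorial * Real.Gamma (μ * m + ϑ))

lemma mittagLeffler_eq_tsum (μ ϑ ζ z : ℝ) :
    mittagLeffler μ ϑ ζ z = ∑' m, mittagLefflerCoeff μ ϑ ζ m * z ^ m :=
  tsum_congr fun m => by rw [mittagLefflerCoeff]; ring

lemma mittagLeffler_zero (μ ϑ : ℝ) {ζ : ℝ} (hζ : 0 < ζ) :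
    mittagLeffler μ ϑ ζ 0 = (Real.Gamma ϑ)⁻¹ := by
  rw [mittagLeffler, tsum_eq_single 0 fun m hm => by simp [zero_pow hm]]
  simp [risingFactorial_zero hζ]

lemma mittagLefflerCoeff_succ {μ ϑ ζ : ℝ} (hμ : 0 ≤ μ) (hϑ : 0 < ϑ) (hζ : 0 < ζ) (m : ℕ) :
    mittagLefflerCoeff μ ϑ ζ (m + 1) = (ζ + m) / (m + 1) *
      (Real.Gamma (μ * m + ϑ) / Real.Gamma (μ * m + ϑ + μ)) * mittagLefflerCoeff μ ϑ ζ m := by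
  have hΓ : Real.Gamma (μ * m + ϑ) ≠ 0 := (Real.Gamma_pos_of_pos (by positivity)).ne'
  rw [mittagLefflerCoeff, mittagLefflerCoeff, risingFactorial_succ hζ, Nat.factorial_succ,
    Nat.cast_mul, Nat.cast_succ, show μ * m + ϑ + μ = μ * (m + 1) + ϑ by ring]
  field_simp

theorem summable_mittagLefflerCoeff_mul_pow {μ ϑ ζ : ℝ} (hμ : 0 < μ) (hϑ : 0 < ϑ) (hζ : 0 < ζ)
    (z : ℝ) : Summable fun m => mittagLefflerCoeff μ ϑ ζ m * z ^ m := by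
  refine summable_of_ratio_norm_eventually_le one_half_lt_one ?_
  have hX : Tendsto (fun m : ℕ => μ * m + ϑ) atTop atTop :=
    tendsto_atTop_add_const_right _ ϑ (tendsto_natCast_atTop_atTop.const_mul_atTop hμ)
  have hlim : Tendsto (fun m : ℕ => (ζ + 1) * |z| *
      (Real.Gamma (μ * m + ϑ) / Real.Gamma (μ * m + ϑ + μ))) atTop (𝓝 0) := by
    simpa using ((tendsto_Gamma_div_Gamma_add_atTop hμ).comp hX).const_mul ((ζ + 1) * |z|)
  filter_upwards [hlim.eventually (ge_mem_nhds one_half_pos)] with m hm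
  have hratio : 0 ≤ Real.Gamma (μ * m + ϑ) / Real.Gamma (μ * m + ϑ + μ) :=
    div_nonneg (Real.Gamma_pos_of_pos (by positivity)).le
      (Real.Gamma_pos_of_pos (by positivity)).le
  have hζm : (ζ + m) / (m + 1) ≤ ζ + 1 := by
    rw [div_le_iff₀ (by positivity)]; nlinarith [(m.cast_nonneg : (0 : ℝ) ≤ m)]
  calc ‖mittagLefflerCoeff μ ϑ ζ (m + 1) * z ^ (m + 1)‖
      = (ζ + m) / (m + 1) * |z| * (Real.Gamma (μ * m + ϑ) / Real.Gamma (μ * m + ϑ + μ)) *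
          ‖mittagLefflerCoeff μ ϑ ζ m * z ^ m‖ := by
        simp only [mittagLefflerCoeff_succ hμ.le hϑ hζ, pow_succ, Real.norm_eq_abs, abs_mul,
          abs_of_nonneg hratio, abs_of_nonneg (by positivity : 0 ≤ (ζ + m) / (m + 1))]
        ring
    _ ≤ (ζ + 1) * |z| * (Real.Gamma (μ * m + ϑ) / Real.Gamma (μ * m + ϑ + μ)) *
          ‖mittagLefflerCoeff μ ϑ ζ m * z ^ m‖ := by gcongr
    _ ≤ 1 / 2 * ‖mittagLefflerCoeff μ ϑ ζ m * z ^ m‖ := by gcongr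

lemma summable_abs_mittagLefflerCoeff_mul_pow {μ ϑ ζ : ℝ} (hμ : 0 < μ) (hϑ : 0 < ϑ)
    (hζ : 0 < ζ) {r : ℝ} (hr : 0 ≤ r) :
    Summable fun m => |mittagLefflerCoeff μ ϑ ζ m| * r ^ m := by
  simpa only [abs_mul, abs_pow, abs_of_nonneg hr] using
    (summable_mittagLefflerCoeff_mul_pow hμ hϑ hζ r).abs

section Antidiagonal

lemma summable_of_nonneg_of_summable_sum_antidiagonal {F : ℕ × ℕ → ℝ} (hF : ∀ p, 0 ≤ F p)
    (h : Summable fun m => ∑ p ∈ antidiagonal m, F p) : Summable F := by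
  rw [← HasAntidiagonal.sigmaAntidiagonalEquivProd.summable_iff]
  exact (summable_sigma_of_nonneg fun _ => hF _).2
    ⟨fun _ => .of_finite, h.congr fun m => (Finset.tsum_subtype _ F).symm⟩

lemma tsum_eq_tsum_sum_antidiagonal {α : Type*} [AddCommMonoid α] [TopologicalSpace α]
    [ContinuousAdd α] [T3Space α] {F : ℕ × ℕ → α} (h : Summable F) :
    ∑' p, F p = ∑' m, ∑ p ∈ antidiagonal m, F p := by
  rw [← HasAntidiagonal.sigmaAntidiagonalEquivProd.tsum_eq]
  exact ((HasAntidiagonal.sigmaAntidiagonalEquivProd.summable_iff.2 h).tsum_sigma'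
    fun _ => .of_finite).trans (tsum_congr fun m => Finset.tsum_subtype _ F)

lemma sum_antidiagonal_mul_choose_mul_pow_mul_pow {R : Type*} [CommSemiring R]
    (c : ℕ → R) (u v : R) (m : ℕ) :
    ∑ p ∈ antidiagonal m, c (p.1 + p.2) * (p.1 + p.2).choose p.1 * u ^ p.1 * v ^ p.2 =
      c m * (u + v) ^ m := by
  rw [(Commute.all u v).add_pow', Finset.mul_sum]
  refine Finset.sum_congr rfl fun p hp => ?_
  rw [mem_antidiagonal.1 hp, nsmul_eq_mul]
  ring

variable {c : ℕ → ℝ} {u v : ℝ}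

theorem summable_abs_binomial_expansion (h : Summable fun m => |c m| * (|u| + |v|) ^ m) :
    Summable fun p : ℕ × ℕ => |c (p.1 + p.2) * (p.1 + p.2).choose p.1 * u ^ p.1 * v ^ p.2| := by
  refine summable_of_nonneg_of_summable_sum_antidiagonal (fun _ => abs_nonneg _) ?_
  simpa only [abs_mul, abs_pow, Nat.abs_cast,
    sum_antidiagonal_mul_choose_mul_pow_mul_pow fun m => |c m|] using h

theorem tsum_binomial_expansion (h : Summable fun m => |c m| * (|u| + |v|) ^ m) :
    ∑' p : ℕ × ℕ, c (p.1 + p.2) * (p.1 + p.2).choose p.1 * u ^ p.1 * v ^ p.2 =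
      ∑' m, c m * (u + v) ^ m := by
  rw [tsum_eq_tsum_sum_antidiagonal (summable_abs_binomial_expansion h).of_abs]
  simp only [sum_antidiagonal_mul_choose_mul_pow_mul_pow]

end Antidiagonal

noncomputable def fcpTerm (μ ϑ ζ x : ℝ) (n k : ℕ) : ℝ :=
  risingFactorial ζ n * Real.Gamma ϑ * x ^ n / n.factorial *
    (risingFactorial (ζ + n) k * (-x) ^ k / (k.factorial * Real.Gamma (μ * (n + k : ℕ) + ϑ)))

lemma fcpP_eq_tsum_fcpTerm (μ ϑ ζ θ lam : ℝ) (n : ℕ) (t : ℝ) :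
    fcpP μ ϑ ζ θ lam n t = ∑' k, fcpTerm μ ϑ ζ (lam * t ^ θ) n k :=
  (tsum_mul_left).symm

lemma pow_mul_fcpTerm {ζ : ℝ} (hζ : 0 < ζ) (μ ϑ x s : ℝ) (n k : ℕ) :
    s ^ n * fcpTerm μ ϑ ζ x n k = Real.Gamma ϑ * (mittagLefflerCoeff μ ϑ ζ (n + k) *
      (n + k).choose n * (x * s) ^ n * (-x) ^ k) := by
  rw [fcpTerm, mittagLefflerCoeff, ← risingFactorial_mul_risingFactorial_add hζ,
    Nat.cast_choose ℝ (Nat.le_add_right n k), Nat.add_sub_cancel_left]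
  field_simp
  ring

theorem summable_abs_pow_mul_fcpTerm {μ ϑ ζ : ℝ} (hμ : 0 < μ) (hϑ : 0 < ϑ) (hζ : 0 < ζ)
    (x s : ℝ) :
    Summable fun p : ℕ × ℕ => |s ^ p.1 * fcpTerm μ ϑ ζ x p.1 p.2| := by
  simp_rw [pow_mul_fcpTerm hζ, abs_mul (Real.Gamma ϑ)]
  exact (summable_abs_binomial_expansion
    (summable_abs_mittagLefflerCoeff_mul_pow hμ hϑ hζ (by positivity))).mul_left _

theorem tsum_pow_mul_tsum_fcpTerm {μ ϑ ζ : ℝ} (hμ : 0 < μ) (hϑ : 0 < ϑ) (hζ : 0 < ζ)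
    (x s : ℝ) :
    ∑' n : ℕ, s ^ n * ∑' k : ℕ, fcpTerm μ ϑ ζ x n k =
      Real.Gamma ϑ * mittagLeffler μ ϑ ζ (x * (s - 1)) := by
  simp_rw [← tsum_mul_left]
  rw [← (summable_abs_pow_mul_fcpTerm hμ hϑ hζ x s).of_abs.tsum_prod]
  simp_rw [pow_mul_fcpTerm hζ]
  rw [tsum_mul_left, tsum_binomial_expansion
    (summable_abs_mittagLefflerCoeff_mul_pow hμ hϑ hζ (by positivity)), mittagLeffler_eq_tsum,
    ← sub_eq_add_neg, mul_sub_one]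

theorem fcp_pgf_general (μ ϑ ζ θ lam t : ℝ) (hμ : 0 < μ) (hζ : 0 < ζ)
    (hϑ : μ * ζ ≤ ϑ) (s : ℝ) :
    (Summable fun p : ℕ × ℕ =>
      |s ^ p.1 * (risingFactorial ζ p.1 * Real.Gamma ϑ * (lam * t ^ θ) ^ p.1 / p.1.factorial *
        (risingFactorial (ζ + p.1) p.2 * (-(lam * t ^ θ)) ^ p.2 /
          (p.2.factorial * Real.Gamma (μ * (p.1 + p.2 : ℕ) + ϑ))))|) ∧
    (∑' n : ℕ, s ^ n * fcpP μ ϑ ζ θ lam n t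
      = Real.Gamma ϑ * mittagLeffler μ ϑ ζ (lam * t ^ θ * (s - 1))) ∧
    (∑' n : ℕ, fcpP μ ϑ ζ θ lam n t = 1) := by
  have hϑ0 : 0 < ϑ := (mul_pos hμ hζ).trans_le hϑ
  have hpgf (s : ℝ) := tsum_pow_mul_tsum_fcpTerm hμ hϑ0 hζ (lam * t ^ θ) s
  simp_rw [← fcpP_eq_tsum_fcpTerm] at hpgf
  refine ⟨summable_abs_pow_mul_fcpTerm hμ hϑ0 hζ _ s, hpgf s, ?_⟩
  simpa [mittagLeffler_zero μ ϑ hζ, (Real.Gamma_pos_of_pos hϑ0).ne'] using hpgf 1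

/-- The probability generating function of the FCP:
`∑_n s^n P(n,t) = Γ(ϑ) E_{μ,ϑ}^{ζ}(λ t^θ (s−1))`, the underlying double series
converging absolutely; in particular `∑_n P(n,t) = 1`. -/
theorem fcp_pgf (μ ϑ ζ θ lam t : ℝ) (hμ : 0 < μ) (hμ1 : μ ≤ 1) (hζ : 0 < ζ)
    (hϑ : μ * ζ ≤ ϑ) (hθ : 0 < θ) (hθ1 : θ ≤ 1) (hlam : 0 < lam) (ht : 0 < t) (s : ℝ) :
    (Summable fun p : ℕ × ℕ =>
      |s ^ p.1 * (risingFactorial ζ p.1 * Real.Gamma ϑ * (lam * t ^ θ) ^ p.1 / p.1.factorial *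
        (risingFactorial (ζ + p.1) p.2 * (-(lam * t ^ θ)) ^ p.2 /
          (p.2.factorial * Real.Gamma (μ * (p.1 + p.2 : ℕ) + ϑ))))|) ∧
    (∑' n : ℕ, s ^ n * fcpP μ ϑ ζ θ lam n t
      = Real.Gamma ϑ * mittagLeffler μ ϑ ζ (lam * t ^ θ * (s - 1))) ∧
    (∑' n : ℕ, fcpP μ ϑ ζ θ lam n t = 1) :=
  fcp_pgf_general μ ϑ ζ θ lam t hμ hζ hϑ s
end

section
/- Let 0 < μ ≤ 1, ζ > 0, ϑ ≥ μζ, 0 < θ ≤ 1, λ > 0. Let (Ω, F, ℙ) be a probability space carrying i.i.d. real random variables X₁, X₂, … , set R_m = X₁·X₂⋯X_m and F_m = ℙ[R_m ≤ y] for a fixed y ∈ ℝ, and let H : Ω → [0,∞) be a random variable with 𝔼[E_{μ,ϑ}^{ζ}(2λ H^θ)] < ∞. Define for u ≥ 0 the cdf of the multiplicative compound FCP W(y,u) = 𝟙_{y ≥ 1} · Γ(ϑ) E_{μ,ϑ}^{ζ}(−λ u^θ) + ∑_{m=1}^∞ P(m,u) F_m. Then 𝔼[W(y,H)] = 𝟙_{y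 ≥ 1} Γ(ϑ) ∑_{k=0}^∞ ( (ζ)_k (−λ)^k / (k! Γ(μk+ϑ)) ) 𝔼[H^{θk}] + Γ(ϑ) ∑_{m=1}^∞ ( λ^m (ζ)_m / m! ) F_m ∑_{l=0}^∞ ( (ζ+m)_l (−λ)^l / (l! Γ(μ(l+m)+ϑ)) ) 𝔼[H^{θ(l+m)}], with all series converging absolutely. -/
open Real MeasureTheory ProbabilityTheory

/-!
Put `x = λ H^θ`. Expanding the Mittag-Leffler function and each `P(m, H)` turns `W(y, H)` into
series in the powers `H^{θ s}`. Since `(ζ)_m (ζ+m)_l = (ζ)_{m+l}` and `0 ≤ F_m ≤ 1`, every term is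
bounded in absolute value by a term of the nonnegative double family
`(ζ)_{m+l} x^{m+l} / (m! l! Γ(μ(m+l)+ϑ))`, under an injective reindexing. Because
`∑_{m+l=s} 1/(m! l!) = 2^s/s!`, that family sums to `E_{μ,ϑ}^ζ(2x)`, which is integrable by
hypothesis; by Tonelli its terms then have summable integrals, which justifies exchanging
expectation and summation. Absolute convergence of the Mittag-Leffler series itself comes from
the lower bound `Γ(x) ≥ T^{x-1} e^{-T}` (`x ≥ 1`, `T > 0`).
-/

open Finset Nat

lemma Real.rpow_sub_one_mul_exp_neg_le_Gamma {T x : ℝ} (hT : 0 < T) (hx : 1 ≤ x) :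
    T ^ (x - 1) * exp (-T) ≤ Gamma x := by
  rw [Gamma_eq_integral (by linarith), ← integral_exp_neg_Ioi, ← integral_const_mul]
  have hTt : ∀ t ∈ Set.Ioi T, T ^ (x - 1) * exp (-t) ≤ exp (-t) * t ^ (x - 1) := fun t ht => by
    rw [mul_comm]
    exact mul_le_mul_of_nonneg_left (rpow_le_rpow hT.le (le_of_lt ht) (by linarith)) (exp_pos _).le
  calc ∫ t in Set.Ioi T, T ^ (x - 1) * exp (-t)
      ≤ ∫ t in Set.Ioi T, exp (-t) * t ^ (x - 1) :=
        setIntegral_mono_on ((integrableOn_exp_neg_Ioi T).const_mul _)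
          ((GammaIntegral_convergent (by linarith)).mono_set (Set.Ioi_subset_Ioi hT.le))
          measurableSet_Ioi hTt
    _ ≤ ∫ t in Set.Ioi 0, exp (-t) * t ^ (x - 1) :=
        setIntegral_mono_set (GammaIntegral_convergent (by linarith))
          ((ae_restrict_iff' measurableSet_Ioi).2 (ae_of_all _ fun t ht =>
            mul_nonneg (exp_pos _).le (rpow_nonneg (le_of_lt ht) _)))
          (Set.Ioi_subset_Ioi hT.le).eventuallyLE

lemma summable_pow_div_Gamma {μ : ℝ} (hμ : 0 < μ) (ϑ : ℝ) {C : ℝ} (hC : 0 ≤ C) :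
    Summable fun s : ℕ => C ^ s / Gamma (μ * s + ϑ) := by
  -- with `T ^ μ = C + 1`, the bound `T ^ (x - 1) e^{-T} ≤ Γ(x)` makes the series geometric
  set T := (C + 1) ^ μ⁻¹
  have hT : 0 < T := by positivity
  have hTμ : T ^ μ = C + 1 := rpow_inv_rpow (by linarith) hμ.ne'
  set D := T ^ (ϑ - 1) * exp (-T)
  have hD : 0 < D := by positivity
  have hgeom : Summable fun s : ℕ => D⁻¹ * (C / (C + 1)) ^ s :=
    (summable_geometric_of_lt_one (by positivity)
      ((div_lt_one (by linarith)).2 (by linarith))).mul_left _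
  have hlarge : ∀ᶠ s : ℕ in Filter.atTop, 1 ≤ μ * s + ϑ :=
    ((tendsto_natCast_atTop_atTop.const_mul_atTop hμ).atTop_add
      tendsto_const_nhds).eventually_ge_atTop 1
  refine hgeom.of_norm_bounded_eventually_nat (hlarge.mono fun s hs => ?_)
  have hΓ : (C + 1) ^ s * D ≤ Gamma (μ * s + ϑ) := by
    convert rpow_sub_one_mul_exp_neg_le_Gamma hT hs using 1
    rw [show μ * s + ϑ - 1 = μ * s + (ϑ - 1) by ring, rpow_add hT, rpow_mul hT.le, hTμ,
      rpow_natCast, mul_assoc]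
  have hΓpos : 0 < Gamma (μ * s + ϑ) := (by positivity : (0 : ℝ) < _).trans_le hΓ
  rw [norm_div, norm_pow, Real.norm_of_nonneg hC, Real.norm_of_nonneg hΓpos.le, div_pow,
    div_le_iff₀ hΓpos]
  calc C ^ s = D⁻¹ * (C ^ s / (C + 1) ^ s) * ((C + 1) ^ s * D) := by field_simp
    _ ≤ _ := by gcongr

section RisingFactorial

variable {ζ : ℝ}

lemma risingFactorial_pos (hζ : 0 < ζ) (n : ℕ) : 0 < risingFactorial ζ n :=
  div_pos (Gamma_pos_of_pos (by positivity)) (Gamma_pos_of_pos hζ)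

lemma risingFactorial_add (hζ : 0 < ζ) (n k : ℕ) :
    risingFactorial ζ (n + k) = risingFactorial ζ n * risingFactorial (ζ + n) k := by
  have hΓζ := (Gamma_pos_of_pos hζ).ne'
  have hΓζn := (Gamma_pos_of_pos (by positivity : 0 < ζ + n)).ne'
  simp only [risingFactorial, Nat.cast_add, add_assoc]
  field_simp

lemma risingFactorial_le_pow_mul_factorial (hζ : 0 < ζ) (n : ℕ) :
    risingFactorial ζ n ≤ (ζ + 1) ^ n * n ! := by
  induction n with
  | zero => simp [risingFactorial, (Gamma_pos_of_pos hζ).ne']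
  | succ n ih =>
    have hstep : risingFactorial ζ (n + 1) = (ζ + n) * risingFactorial ζ n := by
      simp only [risingFactorial, Nat.cast_succ, ← add_assoc, mul_div_assoc,
        Gamma_add_one (by positivity : ζ + n ≠ 0)]
    rw [hstep, pow_succ, Nat.factorial_succ, Nat.cast_mul, Nat.cast_succ]
    calc (ζ + n) * risingFactorial ζ n ≤ ((ζ + 1) * (n + 1)) * ((ζ + 1) ^ n * n !) :=
          mul_le_mul (by nlinarith [(Nat.cast_nonneg n : (0:ℝ) ≤ n)]) ih
            (risingFactorial_pos hζ n).le (by positivity)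
      _ = _ := by ring

end RisingFactorial

lemma summable_mittagLeffler {μ ϑ ζ : ℝ} (hμ : 0 < μ) (hϑ : 0 < ϑ) (hζ : 0 < ζ) (z : ℝ) :
    Summable fun s : ℕ => risingFactorial ζ s * z ^ s / (s ! * Gamma (μ * s + ϑ)) := by
  refine (summable_pow_div_Gamma hμ ϑ (by positivity : 0 ≤ (ζ + 1) * |z|)).of_norm_bounded
    fun s => ?_
  have hΓ := Gamma_pos_of_pos (by positivity : 0 < μ * s + ϑ)
  rw [norm_div, norm_mul, norm_pow, Real.norm_of_nonneg (risingFactorial_pos hζ s).le,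
    Real.norm_of_nonneg (by positivity : (0:ℝ) ≤ s ! * Gamma (μ * s + ϑ)), Real.norm_eq_abs,
    mul_pow, div_le_div_iff₀ (by positivity) hΓ]
  calc risingFactorial ζ s * |z| ^ s * Gamma (μ * s + ϑ)
      ≤ (ζ + 1) ^ s * s ! * |z| ^ s * Gamma (μ * s + ϑ) := by
        gcongr; exact risingFactorial_le_pow_mul_factorial hζ s
    _ = _ := by ring

lemma sum_antidiagonal_inv_factorial_mul_factorial (n : ℕ) :
    ∑ p ∈ antidiagonal n, ((p.1 ! : ℝ) * p.2 !)⁻¹ = 2 ^ n / n ! := by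
  rw [eq_div_iff (by positivity), Finset.sum_mul,
    Finset.Nat.sum_antidiagonal_eq_sum_range_succ fun i j => ((i ! : ℝ) * j !)⁻¹ * n !]
  have hchoose : ∀ k ∈ range (n + 1), ((k ! : ℝ) * (n - k)!)⁻¹ * n ! = n.choose k := fun k hk => by
    rw [Nat.cast_choose ℝ (Nat.lt_succ_iff.mp (mem_range.mp hk)), div_eq_inv_mul]
  rw [sum_congr rfl hchoose]
  exact_mod_cast Nat.sum_range_choose n

lemma hasSum_of_hasSum_sum_antidiagonal {f : ℕ × ℕ → ℝ} (hf : 0 ≤ f) {a : ℝ}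
    (h : HasSum (fun n => ∑ p ∈ antidiagonal n, f p) a) : HasSum f a := by
  let e := Finset.HasAntidiagonal.sigmaAntidiagonalEquivProd (A := ℕ)
  have hfiber : ∀ n, ∑' q : antidiagonal n, f q = ∑ p ∈ antidiagonal n, f p :=
    fun n => Finset.tsum_subtype _ f
  have hsum : Summable (f ∘ e) := (summable_sigma_of_nonneg fun x => hf _).2
    ⟨fun n => Summable.of_finite, h.summable.congr fun n => (hfiber n).symm⟩
  rw [← e.hasSum_iff]
  convert hsum.hasSum
  rw [hsum.tsum_sigma' fun n => Summable.of_finite, h.tsum_eq.symm]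
  exact tsum_congr fun n => (hfiber n).symm

noncomputable def mittagLefflerPairTerm (μ ϑ ζ x : ℝ) (p : ℕ × ℕ) : ℝ :=
  risingFactorial ζ (p.1 + p.2) * x ^ (p.1 + p.2) /
    (p.1 ! * p.2 ! * Gamma (μ * (p.1 + p.2 : ℕ) + ϑ))

lemma mittagLefflerPairTerm_nonneg {μ ϑ ζ x : ℝ} (hμ : 0 ≤ μ) (hϑ : 0 < ϑ) (hζ : 0 < ζ) (hx : 0 ≤ x)
    (p : ℕ × ℕ) :
    0 ≤ mittagLefflerPairTerm μ ϑ ζ x p := by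
  have := risingFactorial_pos hζ (p.1 + p.2)
  have := Gamma_pos_of_pos (by positivity : 0 < μ * (p.1 + p.2 : ℕ) + ϑ)
  unfold mittagLefflerPairTerm
  positivity

lemma hasSum_mittagLefflerPairTerm {μ ϑ ζ x : ℝ} (hμ : 0 < μ) (hϑ : 0 < ϑ) (hζ : 0 < ζ)
    (hx : 0 ≤ x) :
    HasSum (mittagLefflerPairTerm μ ϑ ζ x) (mittagLeffler μ ϑ ζ (2 * x)) := by
  have hfiber : ∀ n, ∑ p ∈ antidiagonal n, mittagLefflerPairTerm μ ϑ ζ x p =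
      risingFactorial ζ n * (2 * x) ^ n / (n ! * Gamma (μ * n + ϑ)) := fun n => by
    have hterm : ∀ p ∈ antidiagonal n, mittagLefflerPairTerm μ ϑ ζ x p =
        risingFactorial ζ n * x ^ n / Gamma (μ * n + ϑ) * ((p.1 ! : ℝ) * p.2 !)⁻¹ := by
      rintro ⟨i, j⟩ hij
      rw [HasAntidiagonal.mem_antidiagonal] at hij
      subst hij
      simp only [mittagLefflerPairTerm]
      field_simp
    rw [sum_congr rfl hterm, ← mul_sum, sum_antidiagonal_inv_factorial_mul_factorial, mul_pow]
    field_simp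
  refine hasSum_of_hasSum_sum_antidiagonal (mittagLefflerPairTerm_nonneg hμ.le hϑ hζ hx) ?_
  rw [funext hfiber]
  exact (summable_mittagLeffler hμ hϑ hζ (2 * x)).hasSum

section SeriesIntegral

variable {Ω : Type*} [MeasurableSpace Ω] {P : Measure Ω}

lemma integrable_and_summable_integral_of_integrable_tsum {κ : Type*} {g : κ → Ω → ℝ}
    (hg0 : ∀ j ω, 0 ≤ g j ω) (hgm : ∀ j, AEStronglyMeasurable (g j) P)
    (hgs : ∀ ω, Summable fun j => g j ω) (hgi : Integrable (fun ω => ∑' j, g j ω) P) :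
    (∀ j, Integrable (g j) P) ∧ Summable fun j => ∫ ω, g j ω ∂P := by
  have hint : ∀ j, Integrable (g j) P := fun j =>
    hgi.mono' (hgm j) (ae_of_all _ fun ω => by
      rw [Real.norm_of_nonneg (hg0 j ω)]
      exact (hgs ω).le_tsum j fun k _ => hg0 k ω)
  refine ⟨hint, summable_of_sum_le (c := ∫ ω, ∑' j, g j ω ∂P) (fun j => integral_nonneg (hg0 j))
    fun s => ?_⟩
  rw [← integral_finsetSum s fun j _ => hint j]
  exact integral_mono (integrable_finsetSum s fun j _ => hint j) hgi
    fun ω => (hgs ω).sum_le_tsum s fun k _ => hg0 k ω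

lemma integral_tsum_of_abs_le_comp_injective {ι κ : Type*} [Countable ι]
    {f : ι → Ω → ℝ} {g : κ → Ω → ℝ} {e : ι → κ} (he : Function.Injective e)
    (hfm : ∀ i, Measurable (f i)) (hfg : ∀ i ω, |f i ω| ≤ g (e i) ω)
    (hg0 : ∀ j ω, 0 ≤ g j ω) (hgm : ∀ j, AEStronglyMeasurable (g j) P)
    (hgs : ∀ ω, Summable fun j => g j ω) (hgi : Integrable (fun ω => ∑' j, g j ω) P) :
    Summable (fun i => |∫ ω, f i ω ∂P|) ∧ Integrable (fun ω => ∑' i, f i ω) P ∧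
      ∫ ω, ∑' i, f i ω ∂P = ∑' i, ∫ ω, f i ω ∂P := by
  obtain ⟨hgint, hgsum⟩ := integrable_and_summable_integral_of_integrable_tsum hg0 hgm hgs hgi
  have hfint : ∀ i, Integrable (f i) P := fun i =>
    (hgint (e i)).mono' (hfm i).aestronglyMeasurable (ae_of_all _ (hfg i))
  have hfsum : Summable fun i => ∫ ω, ‖f i ω‖ ∂P :=
    (hgsum.comp_injective he).of_nonneg_of_le (fun i => integral_nonneg fun ω => norm_nonneg _)
      fun i => integral_mono (hfint i).norm (hgint (e i)) (hfg i)
  have hpt : ∀ ω, Summable fun i => |f i ω| := fun ω =>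
    ((hgs ω).comp_injective he).of_nonneg_of_le (fun i => abs_nonneg _) (fun i => hfg i ω)
  refine ⟨hfsum.of_nonneg_of_le (fun i => abs_nonneg _) (fun i => abs_integral_le_integral_abs),
    hgi.mono' (Measurable.tsum hfm).aestronglyMeasurable (ae_of_all _ fun ω => ?_),
    (integral_tsum_of_summable_integral_norm hfint hfsum).symm⟩
  calc ‖∑' i, f i ω‖ ≤ ∑' i, |f i ω| := norm_tsum_le_tsum_norm (hpt ω)
    _ ≤ ∑' i, g (e i) ω := (hpt ω).tsum_le_tsum (fun i => hfg i ω) ((hgs ω).comp_injective he)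
    _ ≤ ∑' j, g j ω := tsum_comp_le_tsum_of_inj (hgs ω) (hg0 · ω) he

lemma integral_tsum_of_abs_le_mittagLefflerPairTerm {ι : Type*} [Countable ι] {μ ϑ ζ θ lam : ℝ}
    (hμ : 0 < μ) (hϑ : 0 < ϑ) (hζ : 0 < ζ) (hlam : 0 ≤ lam) {H : Ω → ℝ} (hHm : Measurable H)
    (hH0 : ∀ ω, 0 ≤ H ω) (hint : Integrable (fun ω => mittagLeffler μ ϑ ζ (2 * lam * H ω ^ θ)) P)
    {f : ι → Ω → ℝ} {e : ι → ℕ × ℕ} (he : Function.Injective e) (hfm : ∀ i, Measurable (f i))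
    (hfg : ∀ i ω, |f i ω| ≤ mittagLefflerPairTerm μ ϑ ζ (lam * H ω ^ θ) (e i)) :
    Summable (fun i => |∫ ω, f i ω ∂P|) ∧ Integrable (fun ω => ∑' i, f i ω) P ∧
      ∫ ω, ∑' i, f i ω ∂P = ∑' i, ∫ ω, f i ω ∂P := by
  have hx : ∀ ω, 0 ≤ lam * H ω ^ θ := fun ω => mul_nonneg hlam (rpow_nonneg (hH0 ω) θ)
  have hsum : ∀ ω, HasSum (mittagLefflerPairTerm μ ϑ ζ (lam * H ω ^ θ))
      (mittagLeffler μ ϑ ζ (2 * lam * H ω ^ θ)) := fun ω => by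
    rw [mul_assoc]
    exact hasSum_mittagLefflerPairTerm hμ hϑ hζ (hx ω)
  exact integral_tsum_of_abs_le_comp_injective he hfm hfg
    (fun p ω => mittagLefflerPairTerm_nonneg hμ.le hϑ hζ (hx ω) p)
    (fun p => Measurable.aestronglyMeasurable (by unfold mittagLefflerPairTerm; fun_prop))
    (fun ω => (hsum ω).summable) (hint.congr (ae_of_all _ fun ω => (hsum ω).tsum_eq.symm))

end SeriesIntegral

section Terms

variable (μ ϑ ζ θ lam : ℝ)

noncomputable def mittagLefflerNegTerm (k : ℕ) (u : ℝ) : ℝ :=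
  risingFactorial ζ k * (-lam) ^ k / (k ! * Gamma (μ * k + ϑ)) * u ^ (θ * (k : ℝ))

-- the `l`-th term of `P(m + 1, u) F_{m + 1} / Γ(ϑ)`, so that the compound part of `W(y, u)` is
-- `Γ(ϑ) ∑_{(m, l)} compoundTailTerm F (m, l) u`
noncomputable def compoundTailTerm (F : ℕ → ℝ) (p : ℕ × ℕ) (u : ℝ) : ℝ :=
  lam ^ (p.1 + 1) * risingFactorial ζ (p.1 + 1) / (p.1 + 1)! * F (p.1 + 1) *
    (risingFactorial (ζ + (p.1 + 1)) p.2 * (-lam) ^ p.2 /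
      (p.2 ! * Gamma (μ * ((p.2 : ℝ) + (p.1 + 1)) + ϑ))) * u ^ (θ * ((p.2 : ℝ) + (p.1 + 1)))

variable {μ ϑ ζ θ lam} {u : ℝ}

lemma mittagLeffler_neg_eq_tsum (hu : 0 ≤ u) :
    mittagLeffler μ ϑ ζ (-(lam * u ^ θ)) = ∑' k, mittagLefflerNegTerm μ ϑ ζ θ lam k u :=
  tsum_congr fun k => by
    rw [mittagLefflerNegTerm, rpow_mul_natCast hu, neg_mul_eq_neg_mul, mul_pow]
    ring

lemma mittagLefflerNegTerm_eq (hu : 0 ≤ u) (k : ℕ) :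
    mittagLefflerNegTerm μ ϑ ζ θ lam k u =
      (-1) ^ k * mittagLefflerPairTerm μ ϑ ζ (lam * u ^ θ) (k, 0) := by
  simp only [mittagLefflerNegTerm, mittagLefflerPairTerm, rpow_mul_natCast hu, neg_pow lam,
    add_zero, Nat.factorial_zero, Nat.cast_one, mul_one, mul_pow]
  ring

lemma compoundTailTerm_eq (hζ : 0 < ζ) (hu : 0 ≤ u) (F : ℕ → ℝ) (p : ℕ × ℕ) :
    compoundTailTerm μ ϑ ζ θ lam F p u =
      (-1) ^ p.2 * F (p.1 + 1) * mittagLefflerPairTerm μ ϑ ζ (lam * u ^ θ) (p.1 + 1, p.2) := by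
  have hcast : ((p.2 : ℝ) + (p.1 + 1)) = ((p.1 + 1 + p.2 : ℕ) : ℝ) := by push_cast; ring
  have hrf := risingFactorial_add hζ (p.1 + 1) p.2
  push_cast at hrf
  simp only [compoundTailTerm, mittagLefflerPairTerm, hcast, rpow_mul_natCast hu, hrf, neg_pow lam,
    mul_pow, pow_add]
  ring

lemma abs_mittagLefflerNegTerm (hμ : 0 ≤ μ) (hϑ : 0 < ϑ) (hζ : 0 < ζ) (hlam : 0 ≤ lam)
    (hu : 0 ≤ u) (k : ℕ) :
    |mittagLefflerNegTerm μ ϑ ζ θ lam k u| = mittagLefflerPairTerm μ ϑ ζ (lam * u ^ θ) (k, 0) := by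
  rw [mittagLefflerNegTerm_eq hu, abs_mul, abs_pow, abs_neg, abs_one, one_pow, one_mul,
    abs_of_nonneg (mittagLefflerPairTerm_nonneg hμ hϑ hζ (by positivity) _)]

lemma abs_compoundTailTerm_le (hμ : 0 ≤ μ) (hϑ : 0 < ϑ) (hζ : 0 < ζ) (hlam : 0 ≤ lam)
    (hu : 0 ≤ u) {F : ℕ → ℝ} (hF : ∀ m, |F m| ≤ 1) (p : ℕ × ℕ) :
    |compoundTailTerm μ ϑ ζ θ lam F p u| ≤
      mittagLefflerPairTerm μ ϑ ζ (lam * u ^ θ) (p.1 + 1, p.2) := by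
  rw [compoundTailTerm_eq hζ hu, abs_mul, abs_mul, abs_pow, abs_neg, abs_one, one_pow, one_mul,
    abs_of_nonneg (mittagLefflerPairTerm_nonneg hμ hϑ hζ (by positivity) _)]
  exact mul_le_of_le_one_left (mittagLefflerPairTerm_nonneg hμ hϑ hζ (by positivity) _) (hF _)

lemma fcpP_succ_mul_eq_tsum (hu : 0 ≤ u) (F : ℕ → ℝ) (m : ℕ) :
    fcpP μ ϑ ζ θ lam (m + 1) u * F (m + 1) =
      Gamma ϑ * ∑' l, compoundTailTerm μ ϑ ζ θ lam F (m, l) u := by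
  rw [fcpP, mul_right_comm, ← tsum_mul_left, ← tsum_mul_left]
  refine tsum_congr fun l => ?_
  have hpow : u ^ (θ * ((l : ℝ) + (m + 1))) = (u ^ θ) ^ (m + 1) * (u ^ θ) ^ l := by
    rw [← pow_add, ← rpow_mul_natCast hu]
    push_cast
    ring_nf
  have hcast : ((m + 1 + l : ℕ) : ℝ) = (l : ℝ) + (m + 1) := by push_cast; ring
  simp only [compoundTailTerm, hcast, Nat.cast_succ, hpow, neg_mul_eq_neg_mul, mul_pow]
  ring

end Terms

lemma tsum_fcpP_succ_mul_eq_tsum {μ ϑ ζ θ lam u : ℝ} (hμ : 0 < μ) (hϑ : 0 < ϑ) (hζ : 0 < ζ)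
    (hlam : 0 ≤ lam) (hu : 0 ≤ u) {F : ℕ → ℝ} (hF : ∀ m, |F m| ≤ 1) :
    ∑' m, fcpP μ ϑ ζ θ lam (m + 1) u * F (m + 1) =
      Gamma ϑ * ∑' p, compoundTailTerm μ ϑ ζ θ lam F p u := by
  have hsum : Summable fun p => compoundTailTerm μ ϑ ζ θ lam F p u :=
    ((hasSum_mittagLefflerPairTerm hμ hϑ hζ (by positivity)).summable.comp_injective
      (Prod.map_injective.2 ⟨add_left_injective 1, Function.injective_id⟩)).of_norm_bounded
      fun p => abs_compoundTailTerm_le hμ.le hϑ hζ hlam hu hF p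
  rw [hsum.tsum_prod' hsum.prod_factor, ← tsum_mul_left]
  exact tsum_congr (fcpP_succ_mul_eq_tsum hu F)

theorem mcfcp_levy_cdf_general {Ω : Type*} [MeasurableSpace Ω] (P : Measure Ω)
    [IsProbabilityMeasure P]
    (μ ϑ ζ θ lam : ℝ) (hμ : 0 < μ) (hζ : 0 < ζ) (hϑ : μ * ζ ≤ ϑ)
    (hlam : 0 < lam)
    (X : ℕ → Ω → ℝ)
    (y : ℝ)
    (F : ℕ → ℝ) (hF : ∀ m, F m = (P {ω | ∏ i ∈ Finset.range m, X i ω ≤ y}).toReal)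
    (H : Ω → ℝ) (hHm : Measurable H) (hH0 : ∀ ω, 0 ≤ H ω)
    (hint : Integrable (fun ω => mittagLeffler μ ϑ ζ (2 * lam * H ω ^ θ)) P)
    (W : ℝ → ℝ → ℝ)
    (hW : ∀ u, W y u = (if 1 ≤ y then Real.Gamma ϑ * mittagLeffler μ ϑ ζ (-(lam * u ^ θ))
        else 0) + ∑' m : ℕ, fcpP μ ϑ ζ θ lam (m + 1) u * F (m + 1)) :
    (Summable fun k : ℕ =>
      |risingFactorial ζ k * (-lam) ^ k / (k.factorial * Real.Gamma (μ * k + ϑ)) *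
        ∫ ω, H ω ^ (θ * (k : ℝ)) ∂P|) ∧
    (Summable fun p : ℕ × ℕ =>
      |lam ^ (p.1 + 1) * risingFactorial ζ (p.1 + 1) / (p.1 + 1).factorial * F (p.1 + 1) *
        (risingFactorial (ζ + (p.1 + 1)) p.2 * (-lam) ^ p.2 /
          (p.2.factorial * Real.Gamma (μ * ((p.2 : ℝ) + (p.1 + 1)) + ϑ))) *
        ∫ ω, H ω ^ (θ * ((p.2 : ℝ) + (p.1 + 1))) ∂P|) ∧
    ((∫ ω, W y (H ω) ∂P)
      = (if 1 ≤ y then 1 else 0) * Real.Gamma ϑ *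
          (∑' k : ℕ, risingFactorial ζ k * (-lam) ^ k /
            (k.factorial * Real.Gamma (μ * k + ϑ)) * ∫ ω, H ω ^ (θ * (k : ℝ)) ∂P)
        + Real.Gamma ϑ * ∑' m : ℕ,
            lam ^ (m + 1) * risingFactorial ζ (m + 1) / (m + 1).factorial * F (m + 1) *
              ∑' l : ℕ, risingFactorial (ζ + (m + 1)) l * (-lam) ^ l /
                (l.factorial * Real.Gamma (μ * ((l : ℝ) + (m + 1)) + ϑ)) *
                ∫ ω, H ω ^ (θ * ((l : ℝ) + (m + 1))) ∂P) := by
  have hϑ0 : 0 < ϑ := (mul_pos hμ hζ).trans_le hϑ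
  have hF1 : ∀ m, |F m| ≤ 1 := fun m => by
    rw [hF m, abs_of_nonneg ENNReal.toReal_nonneg]
    exact ENNReal.toReal_le_of_le_ofReal zero_le_one (by simpa using prob_le_one)
  obtain ⟨hs1, hi1, he1⟩ := integral_tsum_of_abs_le_mittagLefflerPairTerm hμ hϑ0 hζ hlam.le hHm
    hH0 hint (f := fun k ω => mittagLefflerNegTerm μ ϑ ζ θ lam k (H ω)) (Prod.mk_left_injective 0)
    (fun k => by unfold mittagLefflerNegTerm; fun_prop)
    (fun k ω => (abs_mittagLefflerNegTerm hμ.le hϑ0 hζ hlam.le (hH0 ω) k).le)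
  obtain ⟨hs2, hi2, he2⟩ := integral_tsum_of_abs_le_mittagLefflerPairTerm hμ hϑ0 hζ hlam.le hHm
    hH0 hint (f := fun p ω => compoundTailTerm μ ϑ ζ θ lam F p (H ω))
    (Prod.map_injective.2 ⟨add_left_injective 1, Function.injective_id⟩)
    (fun p => by unfold compoundTailTerm; fun_prop)
    (fun p ω => abs_compoundTailTerm_le hμ.le hϑ0 hζ hlam.le (hH0 ω) hF1 p)
  simp only [mittagLefflerNegTerm, compoundTailTerm, integral_const_mul] at hs1 hs2
  refine ⟨hs1, hs2, ?_⟩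
  have hpoint : ∀ ω, W y (H ω) = (if 1 ≤ y then 1 else 0) * Gamma ϑ *
      ∑' k, mittagLefflerNegTerm μ ϑ ζ θ lam k (H ω) +
        Gamma ϑ * ∑' p, compoundTailTerm μ ϑ ζ θ lam F p (H ω) := fun ω => by
    rw [hW, mittagLeffler_neg_eq_tsum (hH0 ω),
      tsum_fcpP_succ_mul_eq_tsum hμ hϑ0 hζ hlam.le (hH0 ω) hF1]
    split_ifs <;> ring
  rw [integral_congr_ae (ae_of_all _ hpoint), integral_add (hi1.const_mul _) (hi2.const_mul _),
    integral_const_mul, integral_const_mul, he1, he2]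
  simp only [mittagLefflerNegTerm, compoundTailTerm, integral_const_mul]
  rw [hs2.of_abs.tsum_prod' hs2.of_abs.prod_factor]
  simp only [← tsum_mul_left, mul_assoc]

/-- Cdf of the multiplicative compound FCP at Lévy times: with
`F_m = ℙ[X₁⋯X_m ≤ y]` and `W(y,u) = 𝟙_{y≥1} Γ(ϑ)E_{μ,ϑ}^{ζ}(−λu^θ) + ∑_{m≥1} P(m,u)F_m`,
one has `𝔼[W(y,H)] = 𝟙_{y≥1} Γ(ϑ) ∑_k (ζ)_k(−λ)^k/(k!Γ(μk+ϑ)) 𝔼[H^{θk}]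
 + Γ(ϑ) ∑_{m≥1} (λ^m(ζ)_m/m!) F_m ∑_l (ζ+m)_l(−λ)^l/(l!Γ(μ(l+m)+ϑ)) 𝔼[H^{θ(l+m)}]`. -/
theorem mcfcp_levy_cdf {Ω : Type*} [MeasurableSpace Ω] (P : Measure Ω)
    [IsProbabilityMeasure P]
    (μ ϑ ζ θ lam : ℝ) (hμ : 0 < μ) (hμ1 : μ ≤ 1) (hζ : 0 < ζ) (hϑ : μ * ζ ≤ ϑ)
    (hθ : 0 < θ) (hθ1 : θ ≤ 1) (hlam : 0 < lam)
    (X : ℕ → Ω → ℝ) (hXm : ∀ i, Measurable (X i))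
    (hXindep : iIndepFun X P)
    (hXid : ∀ i, IdentDistrib (X i) (X 0) P P)
    (y : ℝ)
    (F : ℕ → ℝ) (hF : ∀ m, F m = (P {ω | ∏ i ∈ Finset.range m, X i ω ≤ y}).toReal)
    (H : Ω → ℝ) (hHm : Measurable H) (hH0 : ∀ ω, 0 ≤ H ω)
    (hint : Integrable (fun ω => mittagLeffler μ ϑ ζ (2 * lam * H ω ^ θ)) P)
    (W : ℝ → ℝ → ℝ)
    (hW : ∀ u, W y u = (if 1 ≤ y then Real.Gamma ϑ * mittagLeffler μ ϑ ζ (-(lam * u ^ θ))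
        else 0) + ∑' m : ℕ, fcpP μ ϑ ζ θ lam (m + 1) u * F (m + 1)) :
    (Summable fun k : ℕ =>
      |risingFactorial ζ k * (-lam) ^ k / (k.factorial * Real.Gamma (μ * k + ϑ)) *
        ∫ ω, H ω ^ (θ * (k : ℝ)) ∂P|) ∧
    (Summable fun p : ℕ × ℕ =>
      |lam ^ (p.1 + 1) * risingFactorial ζ (p.1 + 1) / (p.1 + 1).factorial * F (p.1 + 1) *
        (risingFactorial (ζ + (p.1 + 1)) p.2 * (-lam) ^ p.2 /
          (p.2.factorial * Real.Gamma (μ * ((p.2 : ℝ) + (p.1 + 1)) + ϑ))) *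
        ∫ ω, H ω ^ (θ * ((p.2 : ℝ) + (p.1 + 1))) ∂P|) ∧
    ((∫ ω, W y (H ω) ∂P)
      = (if 1 ≤ y then 1 else 0) * Real.Gamma ϑ *
          (∑' k : ℕ, risingFactorial ζ k * (-lam) ^ k /
            (k.factorial * Real.Gamma (μ * k + ϑ)) * ∫ ω, H ω ^ (θ * (k : ℝ)) ∂P)
        + Real.Gamma ϑ * ∑' m : ℕ,
            lam ^ (m + 1) * risingFactorial ζ (m + 1) / (m + 1).factorial * F (m + 1) *
              ∑' l : ℕ, risingFactorial (ζ + (m + 1)) l * (-lam) ^ l /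
                (l.factorial * Real.Gamma (μ * ((l : ℝ) + (m + 1)) + ϑ)) *
                ∫ ω, H ω ^ (θ * ((l : ℝ) + (m + 1))) ∂P) :=
  mcfcp_levy_cdf_general P μ ϑ ζ θ lam hμ hζ hϑ hlam X y F hF H hHm hH0 hint W hW
end
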